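/- arXiv:1910.06363 — 7 statements merged into one kernel-verified Lean document; each statement's English description precedes it below -/
import Mathlib

section
/- Let ρ be a Riesz seminorm on a vector lattice X and let B be a nonempty subset of X. Then B is almost pseudo-bounded with respect to ρ if and only if for every ε > 0 there exists u ∈ X⁺ such that ρ((|x| − u)⁺) ≤ ε for all x ∈ B. -/
open Pointwise

/-! The modulus-distance from `x` to the order interval `[-u, u]` is `(|x| - u)⁺`: it bounds
`|x - z|` from below for every `z` with `|z| ≤ u`, and it bounds `|x - z|` from above for the
truncation `z = (x ⊓ u) ⊔ -u`. An order interval `[a, b]` sits inside `[-u, u]` with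
`u = |a| ⊔ |b|`, so both directions reduce to these two estimates and the monotonicity of `ρ`. -/

section LatticeOrderedGroup

variable {X : Type*} [Lattice X] [AddCommGroup X] [AddLeftMono X]

lemma abs_le_sup_abs_of_mem_Icc {a b z : X} (hz : z ∈ Set.Icc a b) : |z| ≤ |a| ⊔ |b| :=
  abs_le'.2 ⟨hz.2.trans ((le_abs_self b).trans le_sup_right),
    (neg_le_neg_iff.2 hz.1).trans ((neg_le_abs a).trans le_sup_left)⟩

lemma sup_zero_abs_sub_le_abs_sub {u x z : X} (hz : |z| ≤ u) : (|x| - u) ⊔ 0 ≤ |x - z| :=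
  sup_le ((sub_le_sub_left hz _).trans ((le_abs_self _).trans (abs_abs_sub_abs_le x z)))
    (abs_nonneg _)

lemma abs_sub_inf_sup_neg_le (u x : X) : |x - (x ⊓ u ⊔ -u)| ≤ (|x| - u) ⊔ 0 := by
  refine abs_le'.2 ⟨?_, ?_⟩
  · calc x - (x ⊓ u ⊔ -u) ≤ x - x ⊓ u := sub_le_sub_left le_sup_left _
      _ = 0 ⊔ (x - u) := by rw [sub_inf, sub_self]
      _ ≤ (|x| - u) ⊔ 0 := sup_le le_sup_right (le_sup_of_le_left (by gcongr; exact le_abs_self x))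
  · calc -(x - (x ⊓ u ⊔ -u)) = (x ⊓ u - x) ⊔ (-u - x) := by rw [neg_sub, sup_sub]
      _ ≤ 0 ⊔ (|x| - u) := sup_le_sup (sub_nonpos.2 inf_le_left)
          (by rw [sub_eq_neg_add, sub_eq_add_neg]; gcongr; exact neg_le_abs x)
      _ = (|x| - u) ⊔ 0 := sup_comm _ _

lemma inf_sup_neg_mem_Icc {u : X} (hu : 0 ≤ u) (x : X) : x ⊓ u ⊔ -u ∈ Set.Icc (-u) u :=
  ⟨le_sup_right, sup_le inf_le_right (neg_le_self hu)⟩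

end LatticeOrderedGroup

lemma mem_smul_setOf_le_one_iff {X : Type*} [AddCommGroup X] [Module ℝ X] {ρ : X → ℝ}
    (hhom : ∀ (c : ℝ) (x : X), ρ (c • x) = |c| * ρ x) {ε : ℝ} (hε : 0 < ε) {w : X} :
    w ∈ ε • {x : X | ρ x ≤ 1} ↔ ρ w ≤ ε := by
  rw [Set.mem_smul_set_iff_inv_smul_mem₀ hε.ne', Set.mem_ofPred_eq, hhom, abs_of_pos (inv_pos.2 hε),
    inv_mul_le_iff₀ hε, mul_one]

lemma mem_add_smul_setOf_le_one_iff {X : Type*} [AddCommGroup X] [Module ℝ X] {ρ : X → ℝ}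
    (hhom : ∀ (c : ℝ) (x : X), ρ (c • x) = |c| * ρ x) {ε : ℝ} (hε : 0 < ε) {S : Set X} {x : X} :
    x ∈ S + ε • {x : X | ρ x ≤ 1} ↔ ∃ z ∈ S, ρ (x - z) ≤ ε := by
  simp only [Set.mem_add, mem_smul_setOf_le_one_iff hhom hε]
  constructor
  · rintro ⟨z, hz, w, hw, rfl⟩
    exact ⟨z, hz, by rwa [add_sub_cancel_left]⟩
  · rintro ⟨z, hz, hxz⟩
    exact ⟨z, hz, x - z, hxz, add_sub_cancel z x⟩

theorem stmt_0_general {X : Type*} [Lattice X] [AddCommGroup X] [Module ℝ X]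
    [CovariantClass X X (· + ·) (· ≤ ·)]
    (ρ : X → ℝ)
    (hhom : ∀ (c : ℝ) (x : X), ρ (c • x) = |c| * ρ x)
    (hmono : ∀ x y : X, |x| ≤ |y| → ρ x ≤ ρ y)
    (B : Set X) :
    (∀ ε : ℝ, 0 < ε → ∃ a b : X, a ≤ b ∧ B ⊆ Set.Icc a b + ε • {x : X | ρ x ≤ 1}) ↔
      (∀ ε : ℝ, 0 < ε → ∃ u : X, 0 ≤ u ∧ ∀ x ∈ B, ρ ((|x| - u) ⊔ 0) ≤ ε) := by
  constructor
  · intro h ε hε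
    obtain ⟨a, b, -, hB⟩ := h ε hε
    refine ⟨|a| ⊔ |b|, (abs_nonneg a).trans le_sup_left, fun x hx => ?_⟩
    obtain ⟨z, hz, hxz⟩ := (mem_add_smul_setOf_le_one_iff hhom hε).1 (hB hx)
    have hx_sub : |(|x| - (|a| ⊔ |b|)) ⊔ 0| ≤ |x - z| := by
      rw [abs_of_nonneg le_sup_right]
      exact sup_zero_abs_sub_le_abs_sub (abs_le_sup_abs_of_mem_Icc hz)
    exact (hmono _ _ hx_sub).trans hxz
  · intro h ε hε
    obtain ⟨u, hu, hB⟩ := h ε hε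
    refine ⟨-u, u, neg_le_self hu, fun x hx => (mem_add_smul_setOf_le_one_iff hhom hε).2
      ⟨_, inf_sup_neg_mem_Icc hu x, ?_⟩⟩
    have hx_sub : |x - (x ⊓ u ⊔ -u)| ≤ |(|x| - u) ⊔ 0| := by
      rw [abs_of_nonneg le_sup_right]
      exact abs_sub_inf_sup_neg_le u x
    exact (hmono _ _ hx_sub).trans (hB x hx)

/-- For a Riesz seminorm `ρ` on a vector lattice `X` and a nonempty set `B`,
`B` is almost pseudo-bounded iff for every `ε > 0` there is `u ∈ X⁺` with
`ρ((|x| - u)⁺) ≤ ε` for all `x ∈ B`. -/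
theorem stmt_0 {X : Type*} [Lattice X] [AddCommGroup X] [Module ℝ X]
    [CovariantClass X X (· + ·) (· ≤ ·)] [PosSMulMono ℝ X]
    (ρ : X → ℝ)
    (hhom : ∀ (c : ℝ) (x : X), ρ (c • x) = |c| * ρ x)
    (hsub : ∀ x y : X, ρ (x + y) ≤ ρ x + ρ y)
    (hmono : ∀ x y : X, |x| ≤ |y| → ρ x ≤ ρ y)
    (B : Set X) (hB : B.Nonempty) :
    (∀ ε : ℝ, 0 < ε → ∃ a b : X, a ≤ b ∧ B ⊆ Set.Icc a b + ε • {x : X | ρ x ≤ 1}) ↔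
      (∀ ε : ℝ, 0 < ε → ∃ u : X, 0 ≤ u ∧ ∀ x ∈ B, ρ ((|x| - u) ⊔ 0) ≤ ε) :=
  stmt_0_general ρ hhom hmono B
end

section
/- Let ρ be a Riesz seminorm on a vector lattice X and let u ∈ X⁺. Then ρ_u(x) := ρ(|x| ⊓ u) is a Riesz pseudonorm on X: ρ_u(x) ≥ 0, ρ_u(x + y) ≤ ρ_u(x) + ρ_u(y) for all x, y, ρ_u(θx) → 0 as the real scalar θ → 0 for every x, and |x| ≤ |y| implies ρ_u(x) ≤ ρ_u(y). -/
open Filter Topology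

/-- If `ρ` is a Riesz seminorm on a vector lattice `X` and `u ∈ X⁺`, then
`ρ_u(x) := ρ(|x| ⊓ u)` is a Riesz pseudonorm on `X`. -/
theorem stmt_4 {X : Type*} [Lattice X] [AddCommGroup X] [Module ℝ X]
    [CovariantClass X X (· + ·) (· ≤ ·)] [PosSMulMono ℝ X]
    (ρ : X → ℝ)
    (hhom : ∀ (c : ℝ) (x : X), ρ (c • x) = |c| * ρ x)
    (hsub : ∀ x y : X, ρ (x + y) ≤ ρ x + ρ y)
    (hmono : ∀ x y : X, |x| ≤ |y| → ρ x ≤ ρ y)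
    (u : X) (hu : 0 ≤ u) :
    (∀ x : X, 0 ≤ ρ (|x| ⊓ u)) ∧
    (∀ x y : X, ρ (|x + y| ⊓ u) ≤ ρ (|x| ⊓ u) + ρ (|y| ⊓ u)) ∧
    (∀ x : X, Tendsto (fun θ : ℝ => ρ (|θ • x| ⊓ u)) (𝓝 0) (𝓝 0)) ∧
    (∀ x y : X, |x| ≤ |y| → ρ (|x| ⊓ u) ≤ ρ (|y| ⊓ u)) := by
  have hρ0 : ρ 0 = 0 := by
    have := hhom 0 0
    simpa using this
  have hnonneg : ∀ x : X, 0 ≤ ρ x := by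
    intro x
    have h1 : ρ 0 ≤ ρ x + ρ (-x) := by
      have := hsub x (-x)
      simpa using this
    have h2 : ρ (-x) = ρ x := by
      have := hhom (-1 : ℝ) x
      simpa using this
    nlinarith [h1, h2, hρ0]
  -- monotone comparison lemma for nonneg elements
  have hmono' : ∀ x y : X, 0 ≤ x → 0 ≤ y → x ≤ y → ρ x ≤ ρ y := by
    intro x y hx hy hxy
    exact hmono x y (by rwa [abs_of_nonneg hx, abs_of_nonneg hy])
  have habs : ∀ x : X, 0 ≤ |x| ⊓ u := fun x => le_inf (abs_nonneg x) hu
  refine ⟨fun x => hnonneg _, ?_, ?_, ?_⟩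
  · -- subadditivity
    intro x y
    have key : |x + y| ⊓ u ≤ (|x| ⊓ u) + (|y| ⊓ u) := by
      have h1 : |x + y| ⊓ u ≤ (|x| + |y|) ⊓ u :=
        inf_le_inf_right u (abs_add_le x y)
      have h2 : (|x| + |y|) ⊓ u ≤ (|x| ⊓ u) + (|y| ⊓ u) := by
        rw [add_inf, inf_add, inf_add]
        have hxy : |x| + |y| ≥ (|x| + |y|) ⊓ u := inf_le_left
        have hxu : |x| + u ≥ u := le_add_of_nonneg_left (abs_nonneg x)
        have huy : u + |y| ≥ u := le_add_of_nonneg_right (abs_nonneg y)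
        have huu : u + u ≥ u := le_add_of_nonneg_left hu
        refine le_inf (le_inf hxy ?_) (le_inf ?_ ?_) <;>
          exact le_trans inf_le_right (by assumption)
      exact h1.trans h2
    calc ρ (|x + y| ⊓ u) ≤ ρ ((|x| ⊓ u) + (|y| ⊓ u)) :=
          hmono' _ _ (habs _) (add_nonneg (habs x) (habs y)) key
      _ ≤ ρ (|x| ⊓ u) + ρ (|y| ⊓ u) := hsub _ _
  · -- continuity at 0
    intro x
    have hbound : ∀ θ : ℝ, ρ (|θ • x| ⊓ u) ≤ |θ| * ρ x := by
      intro θ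
      have h1 : ρ (|θ • x| ⊓ u) ≤ ρ (|θ • x|) :=
        hmono' _ _ (habs _) (abs_nonneg _) inf_le_left
      have h2 : ρ (|θ • x|) = ρ (θ • x) :=
        le_antisymm (hmono _ _ (by rw [abs_abs])) (hmono _ _ (by rw [abs_abs]))
      rw [h2, hhom] at h1
      exact h1
    have hg : Tendsto (fun θ : ℝ => |θ| * ρ x) (𝓝 0) (𝓝 0) := by
      have : Continuous fun θ : ℝ => |θ| * ρ x := by continuity
      have := this.tendsto 0
      simpa using this
    exact squeeze_zero (fun θ => hnonneg _) hbound hg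
  · -- monotonicity
    intro x y hxy
    exact hmono' _ _ (habs x) (habs y) (inf_le_inf_right u hxy)
end

section
/- Let ρ be a Riesz pseudonorm on a vector lattice X such that the positive cone X⁺ is ρ-closed, i.e., whenever a net (z_α) in X⁺ satisfies ρ(|z_α − z|) → 0 for some z ∈ X, then z ∈ X⁺. Let (x_α) and (y_α) be increasing nets over the same directed index set with ρ(|x_α − x|) → 0, ρ(|y_α − y|) → 0, and |x_α| ⊓ |y_α| = 0 for all α. Then |x| ⊓ |y| = 0. -/
open Filter Topology

universe u

/-- Let `ρ` be a Riesz pseudonorm on a vector lattice `X` whose positive cone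
is `ρ`-closed. If two increasing nets over the same index set are pairwise disjoint and
converge in the pseudo-metric to `x` and `y`, then `x` and `y` are disjoint. -/
theorem stmt_11 {X : Type*} [Lattice X] [AddCommGroup X] [Module ℝ X]
    [CovariantClass X X (· + ·) (· ≤ ·)] [PosSMulMono ℝ X]
    (ρ : X → ℝ)
    (hnonneg : ∀ x : X, 0 ≤ ρ x)
    (hsub : ∀ x y : X, ρ (x + y) ≤ ρ x + ρ y)
    (htend : ∀ x : X, Tendsto (fun θ : ℝ => ρ (θ • x)) (𝓝 0) (𝓝 0))
    (hmono : ∀ x y : X, |x| ≤ |y| → ρ x ≤ ρ y)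
    (hclosed : ∀ {κ : Type u} [Nonempty κ] [Preorder κ] [IsDirected κ (· ≤ ·)]
      (z : κ → X) (z₀ : X), (∀ α, 0 ≤ z α) →
        Tendsto (fun α => ρ |z α - z₀|) atTop (𝓝 0) → 0 ≤ z₀)
    {ι : Type u} [Nonempty ι] [Preorder ι] [IsDirected ι (· ≤ ·)]
    (xs ys : ι → X) (hxs : Monotone xs) (hys : Monotone ys) (x y : X)
    (hxconv : Tendsto (fun α => ρ |xs α - x|) atTop (𝓝 0))
    (hyconv : Tendsto (fun α => ρ |ys α - y|) atTop (𝓝 0))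
    (hdisj : ∀ α, |xs α| ⊓ |ys α| = 0) :
    |x| ⊓ |y| = 0 := by
  set w : X := |x| ⊓ |y| with hw
  have hwnn : 0 ≤ w := le_inf (abs_nonneg x) (abs_nonneg y)
  set z : ι → X := fun α => |x - xs α| + |y - ys α| - w with hz
  have hznn : ∀ α, 0 ≤ z α := by
    intro α
    have h1 : |x| ≤ |x - xs α| + |xs α| := by
      have := abs_add_le (x - xs α) (xs α)
      rwa [sub_add_cancel] at this
    have h2 : |y| ≤ |y - ys α| + |ys α| := by
      have := abs_add_le (y - ys α) (ys α)
      rwa [sub_add_cancel] at this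
    have h3 : w ≤ (|x - xs α| + |xs α|) ⊓ (|y - ys α| + |ys α|) :=
      le_inf (inf_le_left.trans h1) (inf_le_right.trans h2)
    have h4a : |x - xs α| + |xs α| ≤ |x - xs α| + |y - ys α| + |xs α| := by
      rw [add_right_comm]
      exact le_add_of_nonneg_right (abs_nonneg (y - ys α))
    have h4b : |y - ys α| + |ys α| ≤ |x - xs α| + |y - ys α| + |ys α| := by
      rw [add_assoc]
      exact le_add_of_nonneg_left (abs_nonneg _)
    have h5 : (|x - xs α| + |y - ys α| + |xs α|) ⊓ (|x - xs α| + |y - ys α| + |ys α|)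
        = |x - xs α| + |y - ys α| + (|xs α| ⊓ |ys α|) := (add_inf _ _ _).symm
    have h6 : w ≤ |x - xs α| + |y - ys α| := by
      have := h3.trans ((inf_le_inf h4a h4b).trans_eq h5)
      rwa [hdisj α, add_zero] at this
    simpa [hz, sub_nonneg] using h6
  have hkey : Tendsto (fun α => ρ |z α - (-w)|) atTop (𝓝 0) := by
    have hbound : ∀ α, ρ |z α - (-w)| ≤ ρ |xs α - x| + ρ |ys α - y| := by
      intro α
      have heq : z α - (-w) = |x - xs α| + |y - ys α| := by
        simp only [hz]
        abel
      rw [heq]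
      have hnn : (0:X) ≤ |x - xs α| + |y - ys α| :=
        add_nonneg (abs_nonneg _) (abs_nonneg _)
      rw [abs_of_nonneg hnn]
      rw [abs_sub_comm x (xs α), abs_sub_comm y (ys α)]
      exact hsub _ _
    have hsum : Tendsto (fun α => ρ |xs α - x| + ρ |ys α - y|) atTop (𝓝 0) := by
      simpa using hxconv.add hyconv
    exact squeeze_zero (fun α => hnonneg _) hbound hsum
  have hneg : (0:X) ≤ -w := hclosed z (-w) hznn hkey
  have hle : w ≤ 0 := neg_nonneg.mp hneg
  exact le_antisymm hle hwnn
end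

section
/- Let X be an Archimedean vector lattice and let ρ be an order continuous Riesz pseudonorm on X. If (x_α) is a net in X with 0 ≤ x_α, (x_α) increasing, and x_α ≤ x for all α and some x ∈ X, then (x_α) is ρ-Cauchy: for every ε > 0 there exists α₀ such that ρ(|x_α − x_β|) < ε for all α, β ≥ α₀. -/
/-!
For a net `x_α` bounded above, the differences `y - x_γ`, with `y` an upper bound of the net,
form a downward directed set with infimum `0`: if `z` lies below all of them, then `p = z ⊔ 0`
does too, so `y - n • p` is again an upper bound for every `n`, and the Archimedean property
forces `p = 0`. For an increasing net, `y - x_γ` dominates `|x_α - x_β|` once `α, β ≥ γ`, so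
the double net `(α, β) ↦ |x_α - x_β|` order converges to `0`, and order continuity of `ρ`
yields the Cauchy property.
-/

open Filter Topology

/-- A net `x : ι → X` order converges to `x₀`: there is a decreasing net (equivalently, a
downward-directed set `D`) with infimum `0` such that for every member `d` of it, eventually
`|x α - x₀| ≤ d`. -/
def OrderConvNet {X : Type*} [Lattice X] [AddCommGroup X]
    {ι : Type*} [Preorder ι] (x : ι → X) (x₀ : X) : Prop :=
  ∃ D : Set X, D.Nonempty ∧ DirectedOn (· ≥ ·) D ∧ IsGLB D 0 ∧
    ∀ d ∈ D, ∃ α₀ : ι, ∀ α : ι, α₀ ≤ α → |x α - x₀| ≤ d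

universe u

open Set Pointwise

instance Prod.isDirectedOrder {α β : Type*} [LE α] [LE β] [IsDirectedOrder α]
    [IsDirectedOrder β] : IsDirectedOrder (α × β) where
  directed a b := by
    obtain ⟨c₁, ha₁, hb₁⟩ := exists_ge_ge a.1 b.1
    obtain ⟨c₂, ha₂, hb₂⟩ := exists_ge_ge a.2 b.2
    exact ⟨(c₁, c₂), ⟨ha₁, ha₂⟩, ⟨hb₁, hb₂⟩⟩

section LatticeOrderedGroup

variable {X : Type*} [Lattice X] [AddCommGroup X] [AddLeftMono X]

theorem sub_nsmul_mem_upperBounds {S : Set X} {p : X}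
    (hp : ∀ y ∈ upperBounds S, ∀ a ∈ S, p ≤ y - a) {y : X} (hy : y ∈ upperBounds S) :
    ∀ n : ℕ, y - n • p ∈ upperBounds S
  | 0 => by simpa using hy
  | n + 1 => fun a ha => by
    rw [succ_nsmul, ← sub_sub]
    exact le_sub_comm.1 (hp _ (sub_nsmul_mem_upperBounds hp hy n) a ha)

theorem isGLB_upperBounds_sub_zero
    (harch : ∀ z y : X, (∀ n : ℕ, 0 ≤ n • z ∧ n • z ≤ y) → z = 0)
    {S : Set X} (hne : S.Nonempty) (hbdd : BddAbove S) : IsGLB (upperBounds S - S) 0 := by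
  have hnonneg : ∀ d ∈ upperBounds S - S, 0 ≤ d := by
    rintro _ ⟨y, hy, a, ha, rfl⟩
    exact sub_nonneg.2 (hy ha)
  refine ⟨hnonneg, fun z hz => ?_⟩
  have hp : ∀ y ∈ upperBounds S, ∀ a ∈ S, z ⊔ 0 ≤ y - a := fun y hy a ha =>
    sup_le (hz ⟨y, hy, a, ha, rfl⟩) (hnonneg _ ⟨y, hy, a, ha, rfl⟩)
  obtain ⟨a, ha⟩ := hne
  obtain ⟨y, hy⟩ := hbdd
  have hp0 : z ⊔ 0 = 0 := harch _ (y - a) fun n =>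
    ⟨nsmul_nonneg le_sup_right n, le_sub_comm.1 (sub_nsmul_mem_upperBounds hp hy n ha)⟩
  exact hp0 ▸ le_sup_left

theorem DirectedOn.upperBounds_sub {S : Set X} (hS : DirectedOn (· ≤ ·) S) :
    DirectedOn (· ≥ ·) (upperBounds S - S) := by
  rintro _ ⟨y₁, hy₁, a₁, ha₁, rfl⟩ _ ⟨y₂, hy₂, a₂, ha₂, rfl⟩
  obtain ⟨a, ha, h₁, h₂⟩ := hS a₁ ha₁ a₂ ha₂
  exact ⟨y₁ ⊓ y₂ - a, ⟨y₁ ⊓ y₂, fun b hb => le_inf (hy₁ hb) (hy₂ hb), a, ha, rfl⟩,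
    sub_le_sub inf_le_left h₁, sub_le_sub inf_le_right h₂⟩

theorem Monotone.abs_sub_le_of_mem_upperBounds {ι : Type*} [Preorder ι] {xs : ι → X}
    (hmon : Monotone xs) {y : X} (hy : y ∈ upperBounds (range xs)) {α β γ : ι}
    (hα : γ ≤ α) (hβ : γ ≤ β) : |xs α - xs β| ≤ y - xs γ := by
  refine abs_le'.2 ⟨sub_le_sub (hy ⟨α, rfl⟩) (hmon hβ), ?_⟩
  rw [neg_sub]
  exact sub_le_sub (hy ⟨β, rfl⟩) (hmon hα)

theorem Monotone.orderConvNet_abs_sub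
    (harch : ∀ z y : X, (∀ n : ℕ, 0 ≤ n • z ∧ n • z ≤ y) → z = 0)
    {ι : Type*} [Nonempty ι] [Preorder ι] [IsDirectedOrder ι] {xs : ι → X}
    (hmon : Monotone xs) (hbdd : BddAbove (range xs)) :
    OrderConvNet (fun p : ι × ι => |xs p.1 - xs p.2|) 0 := by
  refine ⟨upperBounds (range xs) - range xs, hbdd.sub (range_nonempty xs),
    (directedOn_range.2 hmon.directed_le).upperBounds_sub,
    isGLB_upperBounds_sub_zero harch (range_nonempty xs) hbdd, ?_⟩
  rintro _ ⟨y, hy, _, ⟨γ, rfl⟩, rfl⟩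
  refine ⟨(γ, γ), fun p hp => ?_⟩
  rw [sub_zero, abs_abs]
  exact hmon.abs_sub_le_of_mem_upperBounds hy hp.1 hp.2

end LatticeOrderedGroup

theorem stmt_13_general {X : Type*} [Lattice X] [AddCommGroup X]
    [CovariantClass X X (· + ·) (· ≤ ·)]
    (harch : ∀ z y : X, (∀ n : ℕ, 0 ≤ n • z ∧ n • z ≤ y) → z = 0)
    (ρ : X → ℝ)
    (hoc : ∀ {ι : Type u} [Nonempty ι] [Preorder ι] [IsDirected ι (· ≤ ·)]
      (x : ι → X) (x₀ : X), OrderConvNet x x₀ →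
        Tendsto (fun α => ρ (x α - x₀)) atTop (𝓝 0))
    {ι : Type u} [Nonempty ι] [Preorder ι] [IsDirected ι (· ≤ ·)]
    (xs : ι → X) (hmon : Monotone xs)
    (x : X) (hub : ∀ α, xs α ≤ x) :
    ∀ ε : ℝ, 0 < ε → ∃ α₀ : ι, ∀ α, α₀ ≤ α → ∀ β, α₀ ≤ β → ρ |xs α - xs β| < ε := by
  intro ε hε
  have hconv := hmon.orderConvNet_abs_sub harch ⟨x, forall_mem_range.2 hub⟩
  have hlim := hoc _ 0 hconv
  simp only [sub_zero] at hlim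
  exact eventually_atTop_prod_self'.1 (hlim.eventually_lt_const hε)

/-- In an Archimedean vector lattice with an order continuous Riesz
pseudonorm `ρ`, every increasing net of positive elements which is bounded above is
`ρ`-Cauchy. -/
theorem stmt_13 {X : Type*} [Lattice X] [AddCommGroup X] [Module ℝ X]
    [CovariantClass X X (· + ·) (· ≤ ·)] [PosSMulMono ℝ X]
    (harch : ∀ z y : X, (∀ n : ℕ, 0 ≤ n • z ∧ n • z ≤ y) → z = 0)
    (ρ : X → ℝ)
    (hnonneg : ∀ x : X, 0 ≤ ρ x)
    (hsub : ∀ x y : X, ρ (x + y) ≤ ρ x + ρ y)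
    (htend : ∀ x : X, Tendsto (fun θ : ℝ => ρ (θ • x)) (𝓝 0) (𝓝 0))
    (hmono : ∀ x y : X, |x| ≤ |y| → ρ x ≤ ρ y)
    (hoc : ∀ {ι : Type u} [Nonempty ι] [Preorder ι] [IsDirected ι (· ≤ ·)]
      (x : ι → X) (x₀ : X), OrderConvNet x x₀ →
        Tendsto (fun α => ρ (x α - x₀)) atTop (𝓝 0))
    {ι : Type u} [Nonempty ι] [Preorder ι] [IsDirected ι (· ≤ ·)]
    (xs : ι → X) (hpos : ∀ α, 0 ≤ xs α) (hmon : Monotone xs)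
    (x : X) (hub : ∀ α, xs α ≤ x) :
    ∀ ε : ℝ, 0 < ε → ∃ α₀ : ι, ∀ α, α₀ ≤ α → ∀ β, α₀ ≤ β → ρ |xs α - xs β| < ε :=
  stmt_13_general harch ρ hoc xs hmon x hub
end

section
/- Let ρ be a Riesz pseudonorm on a vector lattice X and ρ' a pseudonorm on a vector lattice Y having the subsequence property: whenever ρ'(yₙ) → 0, some subsequence (y_{n_k}) order converges to 0. Let T : X → Y be sequentially pseudonorm compact: for every sequence (xₙ) in X with sup_n ρ(xₙ) < ∞ there exist a subsequence (x_{n_k}) and y ∈ Y with ρ'(T x_{n_k} − y) → 0. Then T is sequentially order compact: for every order bounded sequence (xₙ) in X there exist a subsequence (x_{n_k}) and y ∈ Y such that (T x_{n_k}) order converges to y. -/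
open Filter Topology

/-- A sequence `y : ℕ → Y` order converges to `y₀`: there is a decreasing sequence `z` with
infimum `0` such that for every `k`, eventually `|y n - y₀| ≤ z k`. -/
def SeqOrderConvTo {Y : Type*} [Lattice Y] [AddCommGroup Y] (y : ℕ → Y) (y₀ : Y) : Prop :=
  ∃ z : ℕ → Y, Antitone z ∧ IsGLB (Set.range z) 0 ∧
    ∀ k : ℕ, ∃ N : ℕ, ∀ n ≥ N, |y n - y₀| ≤ z k

/-- If `ρ'` has the subsequence property and `T` is sequentially pseudonorm
compact, then `T` is sequentially order compact. -/
theorem stmt_16 {X : Type*} [Lattice X] [AddCommGroup X] [Module ℝ X]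
    [CovariantClass X X (· + ·) (· ≤ ·)] [PosSMulMono ℝ X]
    {Y : Type*} [Lattice Y] [AddCommGroup Y] [Module ℝ Y]
    [CovariantClass Y Y (· + ·) (· ≤ ·)] [PosSMulMono ℝ Y]
    (ρ : X → ℝ)
    (hnonneg : ∀ x : X, 0 ≤ ρ x)
    (hsub : ∀ x y : X, ρ (x + y) ≤ ρ x + ρ y)
    (htend : ∀ x : X, Tendsto (fun θ : ℝ => ρ (θ • x)) (𝓝 0) (𝓝 0))
    (hmono : ∀ x y : X, |x| ≤ |y| → ρ x ≤ ρ y)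
    (ρ' : Y → ℝ)
    (h'nonneg : ∀ y : Y, 0 ≤ ρ' y)
    (h'sub : ∀ y z : Y, ρ' (y + z) ≤ ρ' y + ρ' z)
    (h'tend : ∀ y : Y, Tendsto (fun θ : ℝ => ρ' (θ • y)) (𝓝 0) (𝓝 0))
    (hsubseq : ∀ y : ℕ → Y, Tendsto (fun n => ρ' (y n)) atTop (𝓝 0) →
      ∃ φ : ℕ → ℕ, StrictMono φ ∧ SeqOrderConvTo (fun k => y (φ k)) 0)
    (T : X → Y)
    (hcpt : ∀ x : ℕ → X, (∃ M : ℝ, ∀ n, ρ (x n) ≤ M) →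
      ∃ (φ : ℕ → ℕ) (y : Y), StrictMono φ ∧
        Tendsto (fun k => ρ' (T (x (φ k)) - y)) atTop (𝓝 0)) :
    ∀ x : ℕ → X, (∃ a b : X, ∀ n, x n ∈ Set.Icc a b) →
      ∃ (φ : ℕ → ℕ) (y : Y), StrictMono φ ∧
        SeqOrderConvTo (fun k => T (x (φ k))) y := by
  intro x hx
  obtain ⟨a, b, hab⟩ := hx
  -- ρ-boundedness
  have hbd : ∃ M : ℝ, ∀ n, ρ (x n) ≤ M := by
    refine ⟨ρ (|a| ⊔ |b|), fun n => ?_⟩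
    apply hmono
    have h1 := (hab n).1
    have h2 := (hab n).2
    have habs : |x n| ≤ |a| ⊔ |b| := by
      have h3 : -(x n) ≤ -a := by simpa [add_assoc, add_comm, add_left_comm] using add_le_add_left h1 (-(x n) + -a)
      exact abs_le'.2 ⟨h2.trans ((le_abs_self b).trans le_sup_right),
        h3.trans ((neg_le_abs a).trans le_sup_left)⟩
    calc |x n| ≤ |a| ⊔ |b| := habs
    _ ≤ |(|a| ⊔ |b|)| := le_abs_self _
  obtain ⟨φ, y, hφ, hρ'⟩ := hcpt x hbd
  obtain ⟨ψ, hψ, z, hz1, hz2, hz3⟩ := hsubseq (fun k => T (x (φ k)) - y) hρ'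
  refine ⟨φ ∘ ψ, y, hφ.comp hψ, z, hz1, hz2, fun k => ?_⟩
  obtain ⟨N, hN⟩ := hz3 k
  exact ⟨N, fun n hn => by simpa using hN n hn⟩
end

section
/- Let ρ and ρ' be Riesz seminorms on vector lattices X and Y, respectively. Let T : X → Y be a positive linear operator that is pseudo-semicompact: for every B ⊆ X with sup_{x∈B} ρ(x) < ∞, the image T(B) is almost pseudo-bounded in Y with respect to ρ'. If S : X → Y is a linear operator with 0 ≤ S x ≤ T x for all x ∈ X⁺, then S is pseudo-semicompact: for every B ⊆ X with sup_{x∈B} ρ(x) < ∞, the image S(B) is almost pseudo-bounded in Y with respect to ρ'. -/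
/-!
Apply the pseudo-semicompactness of `T` to the bounded set `{|x| : x ∈ B}`: this gives
`T|x| = c + ε • w` with `c ≤ b` and `ρ' w ≤ 1`. Hence `|S x| ≤ S|x| ≤ T|x| ≤ b⁺ + ε • |w|`, and the
Riesz decomposition property splits `S x` into a part in `[-b⁺, b⁺]` and a part dominated by
`ε • |w|`, which lies in `ε • U_{ρ'}` because `U_{ρ'}` is solid.
-/

open Pointwise LatticeOrderedAddCommGroup

section LatticeOrderedGroup

variable {α : Type*} [Lattice α] [AddCommGroup α] [AddLeftMono α]

theorem sub_inf_self_le_of_le_add {y t e : α} (he : 0 ≤ e) (h : y ≤ t + e) : y - y ⊓ t ≤ e := by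
  rw [sub_inf, sub_self]
  exact sup_le he (sub_left_le_of_le_add h)

theorem exists_mem_Icc_abs_sub_le {y t e : α} (ht : 0 ≤ t) (he : 0 ≤ e) (h : |y| ≤ t + e) :
    ∃ p ∈ Set.Icc (-t) t, |y - p| ≤ e := by
  have hpos : y⁺ ≤ t + e := (le_add_of_nonneg_right (negPart_nonneg y)).trans
    ((posPart_add_negPart y).trans_le h)
  have hneg : y⁻ ≤ t + e := (le_add_of_nonneg_left (posPart_nonneg y)).trans
    ((posPart_add_negPart y).trans_le h)
  refine ⟨y⁺ ⊓ t - y⁻ ⊓ t, ⟨?_, ?_⟩, ?_⟩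
  · exact (neg_le_neg_iff.2 inf_le_right).trans
      ((le_add_of_nonneg_right (le_inf (posPart_nonneg y) ht)).trans_eq (neg_add_eq_sub _ _))
  · exact (sub_le_self _ (le_inf (negPart_nonneg y) ht)).trans inf_le_right
  · have hd : y - (y⁺ ⊓ t - y⁻ ⊓ t) = (y⁺ - y⁺ ⊓ t) - (y⁻ - y⁻ ⊓ t) := by
      nth_rewrite 1 [← posPart_sub_negPart y]
      abel
    rw [hd, abs_le', neg_sub]
    exact ⟨(sub_le_self _ (sub_nonneg.2 inf_le_left)).trans (sub_inf_self_le_of_le_add he hpos),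
      (sub_le_self _ (sub_nonneg.2 inf_le_left)).trans (sub_inf_self_le_of_le_add he hneg)⟩

theorem abs_map_le_map_abs {β F : Type*} [Lattice β] [AddCommGroup β] [AddLeftMono β]
    [FunLike F α β] [AddMonoidHomClass F α β] (f : F) (hf : ∀ x, 0 ≤ x → 0 ≤ f x) (x : α) :
    |f x| ≤ f |x| := by
  have hle : ∀ z, z ≤ |x| → f z ≤ f |x| := fun z hz => by
    simpa using hf _ (sub_nonneg.2 hz)
  exact abs_le'.2 ⟨hle x (le_abs_self x), by simpa using hle (-x) (neg_le_abs x)⟩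

end LatticeOrderedGroup

section OrderedModule

variable {E : Type*} [Lattice E] [AddCommGroup E] [Module ℝ E] [PosSMulMono ℝ E]

theorem abs_smul_le_smul_abs {c : ℝ} (hc : 0 ≤ c) (y : E) : |c • y| ≤ c • |y| :=
  abs_le'.2 ⟨smul_le_smul_of_nonneg_left (le_abs_self y) hc,
    by simpa only [smul_neg] using smul_le_smul_of_nonneg_left (neg_le_abs y) hc⟩

theorem LatticeOrderedAddCommGroup.IsSolid.mem_smul_of_abs_le {U : Set E} (hU : IsSolid U)
    {w v : E} (hw : w ∈ U) {ε : ℝ} (hε : 0 < ε) (hv : |v| ≤ ε • |w|) : v ∈ ε • U := by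
  refine ⟨ε⁻¹ • v, hU hw ?_, smul_inv_smul₀ hε.ne' v⟩
  calc |ε⁻¹ • v| ≤ ε⁻¹ • |v| := abs_smul_le_smul_abs (inv_nonneg.2 hε.le) v
    _ ≤ ε⁻¹ • ε • |w| := smul_le_smul_of_nonneg_left hv (inv_nonneg.2 hε.le)
    _ = |w| := inv_smul_smul₀ hε.ne' _

end OrderedModule

theorem stmt_18_general {X : Type*} [Lattice X] [AddCommGroup X] [Module ℝ X]
    [CovariantClass X X (· + ·) (· ≤ ·)]
    {Y : Type*} [Lattice Y] [AddCommGroup Y] [Module ℝ Y]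
    [CovariantClass Y Y (· + ·) (· ≤ ·)] [PosSMulMono ℝ Y]
    (ρ : X → ℝ)
    (hmono : ∀ x y : X, |x| ≤ |y| → ρ x ≤ ρ y)
    (ρ' : Y → ℝ)
    (h'mono : ∀ y z : Y, |y| ≤ |z| → ρ' y ≤ ρ' z)
    (T : X →ₗ[ℝ] Y)
    (hTsc : ∀ B : Set X, (∃ M : ℝ, ∀ x ∈ B, ρ x ≤ M) →
      ∀ ε : ℝ, 0 < ε → ∃ a b : Y, a ≤ b ∧
        (T : X → Y) '' B ⊆ Set.Icc a b + ε • {y : Y | ρ' y ≤ 1})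
    (S : X →ₗ[ℝ] Y) (hST : ∀ x : X, 0 ≤ x → 0 ≤ S x ∧ S x ≤ T x) :
    ∀ B : Set X, (∃ M : ℝ, ∀ x ∈ B, ρ x ≤ M) →
      ∀ ε : ℝ, 0 < ε → ∃ a b : Y, a ≤ b ∧
        (S : X → Y) '' B ⊆ Set.Icc a b + ε • {y : Y | ρ' y ≤ 1} := by
  rintro B ⟨M, hM⟩ ε hε
  have habsB : ∀ z ∈ abs '' B, ρ z ≤ M := by
    rintro _ ⟨x, hx, rfl⟩
    exact (hmono _ _ (abs_abs x).le).trans (hM x hx)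
  obtain ⟨_, b, -, hT⟩ := hTsc _ ⟨M, habsB⟩ ε hε
  refine ⟨-b⁺, b⁺, neg_le_self (posPart_nonneg b), ?_⟩
  rintro _ ⟨x, hx, rfl⟩
  obtain ⟨c, ⟨-, hcb⟩, _, ⟨w, hw, rfl⟩, hTx⟩ := hT ⟨_, ⟨x, hx, rfl⟩, rfl⟩
  have hSx : |S x| ≤ b⁺ + ε • |w| :=
    calc |S x| ≤ S |x| := abs_map_le_map_abs S (fun z hz => (hST z hz).1) x
      _ ≤ T |x| := (hST _ (abs_nonneg x)).2
      _ = c + ε • w := hTx.symm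
      _ ≤ b⁺ + ε • |w| :=
        add_le_add (hcb.trans (le_posPart b)) (smul_le_smul_of_nonneg_left (le_abs_self w) hε.le)
  obtain ⟨p, hp, hv⟩ :=
    exists_mem_Icc_abs_sub_le (posPart_nonneg b) (smul_nonneg hε.le (abs_nonneg w)) hSx
  have hU : IsSolid {y : Y | ρ' y ≤ 1} := fun _ hz _ hy => (h'mono _ _ hy).trans hz
  exact ⟨p, hp, S x - p, hU.mem_smul_of_abs_le hw hε hv, add_sub_cancel p (S x)⟩

/-- An operator dominated by a positive pseudo-semicompact operator (between
vector lattices with Riesz seminorms) is pseudo-semicompact. -/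
theorem stmt_18 {X : Type*} [Lattice X] [AddCommGroup X] [Module ℝ X]
    [CovariantClass X X (· + ·) (· ≤ ·)] [PosSMulMono ℝ X]
    {Y : Type*} [Lattice Y] [AddCommGroup Y] [Module ℝ Y]
    [CovariantClass Y Y (· + ·) (· ≤ ·)] [PosSMulMono ℝ Y]
    (ρ : X → ℝ)
    (hhom : ∀ (c : ℝ) (x : X), ρ (c • x) = |c| * ρ x)
    (hsub : ∀ x y : X, ρ (x + y) ≤ ρ x + ρ y)
    (hmono : ∀ x y : X, |x| ≤ |y| → ρ x ≤ ρ y)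
    (ρ' : Y → ℝ)
    (h'hom : ∀ (c : ℝ) (y : Y), ρ' (c • y) = |c| * ρ' y)
    (h'sub : ∀ y z : Y, ρ' (y + z) ≤ ρ' y + ρ' z)
    (h'mono : ∀ y z : Y, |y| ≤ |z| → ρ' y ≤ ρ' z)
    (T : X →ₗ[ℝ] Y) (hTpos : ∀ x : X, 0 ≤ x → 0 ≤ T x)
    (hTsc : ∀ B : Set X, (∃ M : ℝ, ∀ x ∈ B, ρ x ≤ M) →
      ∀ ε : ℝ, 0 < ε → ∃ a b : Y, a ≤ b ∧
        (T : X → Y) '' B ⊆ Set.Icc a b + ε • {y : Y | ρ' y ≤ 1})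
    (S : X →ₗ[ℝ] Y) (hST : ∀ x : X, 0 ≤ x → 0 ≤ S x ∧ S x ≤ T x) :
    ∀ B : Set X, (∃ M : ℝ, ∀ x ∈ B, ρ x ≤ M) →
      ∀ ε : ℝ, 0 < ε → ∃ a b : Y, a ≤ b ∧
        (S : X → Y) '' B ⊆ Set.Icc a b + ε • {y : Y | ρ' y ≤ 1} :=
  stmt_18_general ρ hmono ρ' h'mono T hTsc S hST
end

section
/- Let X be a Banach lattice admitting a strong norm unit e ∈ X⁺ (‖e‖ = 1 and ‖x‖ ≤ 1 implies |x| ≤ e), and let ρ be a Riesz pseudonorm on X. Let Y be a normed lattice and ρ' a Riesz seminorm on Y that is finer than the norm, i.e., ‖y‖ ≤ ρ'(y) for all y ∈ Y⁺. If T : X → Y is pseudo-semicompact with respect to ρ and ρ' (for every B ⊆ X with sup_{x∈B} ρ(x) < ∞ the image T(B) is almost pseudo-bounded in Y w.r.t. ρ'), then T is semicompact: for every ε > 0 there exists u ∈ Y⁺ such that ‖(|T x| − u)⁺‖ ≤ ε for all x ∈ X with ‖x‖ ≤ 1. -/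
/-!
The strong unit puts the unit ball inside `[-e, e]`, so `ρ` is bounded on it by `ρ e` and
pseudo-semicompactness covers its image by `[a, b] + ε U_{ρ'}`. Writing `T x = c + ε w` with
`c ∈ [a, b]` and `ρ' w ≤ 1`, the element `u = |a| ⊔ |b|` dominates `|c|`, hence
`(|T x| - u)⁺ ≤ ε |w|`, whose norm is at most `ρ' (ε w) ≤ ε` because `ρ'` is finer than the norm.
-/

open Filter Topology Pointwise

section LatticeOrderedGroup

variable {α : Type*} [Lattice α] [AddCommGroup α] [IsOrderedAddMonoid α]

theorem abs_le_sup_abs_of_mem_Icc_s19 {a b c : α} (hc : c ∈ Set.Icc a b) : |c| ≤ |a| ⊔ |b| :=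
  sup_le (le_sup_of_le_right (hc.2.trans (le_abs_self b)))
    (le_sup_of_le_left ((neg_le_neg hc.1).trans (neg_le_abs a)))

theorem abs_add_sub_sup_zero_le {c d u : α} (hc : |c| ≤ u) : (|c + d| - u) ⊔ 0 ≤ |d| := by
  refine sup_le ?_ (abs_nonneg d)
  rw [sub_le_iff_le_add']
  calc |c + d| ≤ |c| + |d| := abs_add_le c d
    _ ≤ u + |d| := by gcongr

end LatticeOrderedGroup

theorem norm_le_of_le_abs_of_finer {Y : Type*} [NormedAddCommGroup Y] [Lattice Y]
    [HasSolidNorm Y] [IsOrderedAddMonoid Y] {ρ' : Y → ℝ}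
    (h'mono : ∀ y z : Y, |y| ≤ |z| → ρ' y ≤ ρ' z) (h'finer : ∀ y : Y, 0 ≤ y → ‖y‖ ≤ ρ' y)
    {y z : Y} (hz : 0 ≤ z) (hzy : z ≤ |y|) : ‖z‖ ≤ ρ' y :=
  calc ‖z‖ ≤ ‖|y|‖ := norm_le_norm_of_abs_le_abs (by rwa [abs_of_nonneg hz, abs_abs])
    _ ≤ ρ' |y| := h'finer _ (abs_nonneg y)
    _ ≤ ρ' y := h'mono _ _ (abs_abs y).le

theorem stmt_19_general {X : Type*} [NormedAddCommGroup X] [Lattice X]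
    {Y : Type*} [NormedAddCommGroup Y] [Lattice Y] [HasSolidNorm Y]
    [IsOrderedAddMonoid Y] [NormedSpace ℝ Y]
    (e : X) (heunit : ∀ x : X, ‖x‖ ≤ 1 → |x| ≤ e)
    (ρ : X → ℝ)
    (hmono : ∀ x y : X, |x| ≤ |y| → ρ x ≤ ρ y)
    (ρ' : Y → ℝ)
    (h'hom : ∀ (c : ℝ) (y : Y), ρ' (c • y) = |c| * ρ' y)
    (h'mono : ∀ y z : Y, |y| ≤ |z| → ρ' y ≤ ρ' z)
    (h'finer : ∀ y : Y, 0 ≤ y → ‖y‖ ≤ ρ' y)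
    (T : X → Y)
    (hTsc : ∀ B : Set X, (∃ M : ℝ, ∀ x ∈ B, ρ x ≤ M) →
      ∀ ε : ℝ, 0 < ε → ∃ a b : Y, a ≤ b ∧
        T '' B ⊆ Set.Icc a b + ε • {y : Y | ρ' y ≤ 1}) :
    ∀ ε : ℝ, 0 < ε → ∃ u : Y, 0 ≤ u ∧
      ∀ x : X, ‖x‖ ≤ 1 → ‖(|T x| - u) ⊔ 0‖ ≤ ε := by
  intro ε hε
  have hball : ∀ x ∈ {x : X | ‖x‖ ≤ 1}, ρ x ≤ ρ e := fun x hx =>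
    hmono x e ((heunit x hx).trans (le_abs_self e))
  obtain ⟨a, b, -, hcover⟩ := hTsc _ ⟨ρ e, hball⟩ ε hε
  refine ⟨|a| ⊔ |b|, le_sup_of_le_left (abs_nonneg a), fun x hx => ?_⟩
  obtain ⟨c, hc, _, ⟨w, hw, rfl⟩, hTx⟩ := hcover ⟨x, hx, rfl⟩
  calc ‖(|T x| - (|a| ⊔ |b|)) ⊔ 0‖ ≤ ρ' (ε • w) := by
        refine norm_le_of_le_abs_of_finer h'mono h'finer le_sup_right ?_
        rw [← hTx]
        exact abs_add_sub_sup_zero_le (abs_le_sup_abs_of_mem_Icc_s19 hc)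
    _ = ε * ρ' w := by rw [h'hom, abs_of_pos hε]
    _ ≤ ε := mul_le_of_le_one_right hε.le hw

/-- Let `X` be a Banach lattice with a strong norm unit `e`, `ρ` a Riesz
pseudonorm on `X`, `Y` a normed lattice and `ρ'` a Riesz seminorm on `Y` finer than the
norm. If `T : X → Y` is pseudo-semicompact with respect to `ρ` and `ρ'`, then `T` is
semicompact. -/
theorem stmt_19 {X : Type*} [NormedAddCommGroup X] [Lattice X] [HasSolidNorm X]
    [IsOrderedAddMonoid X] [CompleteSpace X]
    [NormedSpace ℝ X]
    {Y : Type*} [NormedAddCommGroup Y] [Lattice Y] [HasSolidNorm Y]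
    [IsOrderedAddMonoid Y] [NormedSpace ℝ Y]
    (e : X) (he0 : 0 ≤ e) (he1 : ‖e‖ = 1) (heunit : ∀ x : X, ‖x‖ ≤ 1 → |x| ≤ e)
    (ρ : X → ℝ)
    (hnonneg : ∀ x : X, 0 ≤ ρ x)
    (hsub : ∀ x y : X, ρ (x + y) ≤ ρ x + ρ y)
    (htend : ∀ x : X, Tendsto (fun θ : ℝ => ρ (θ • x)) (𝓝 0) (𝓝 0))
    (hmono : ∀ x y : X, |x| ≤ |y| → ρ x ≤ ρ y)
    (ρ' : Y → ℝ)
    (h'hom : ∀ (c : ℝ) (y : Y), ρ' (c • y) = |c| * ρ' y)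
    (h'sub : ∀ y z : Y, ρ' (y + z) ≤ ρ' y + ρ' z)
    (h'mono : ∀ y z : Y, |y| ≤ |z| → ρ' y ≤ ρ' z)
    (h'finer : ∀ y : Y, 0 ≤ y → ‖y‖ ≤ ρ' y)
    (T : X → Y)
    (hTsc : ∀ B : Set X, (∃ M : ℝ, ∀ x ∈ B, ρ x ≤ M) →
      ∀ ε : ℝ, 0 < ε → ∃ a b : Y, a ≤ b ∧
        T '' B ⊆ Set.Icc a b + ε • {y : Y | ρ' y ≤ 1}) :
    ∀ ε : ℝ, 0 < ε → ∃ u : Y, 0 ≤ u ∧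
      ∀ x : X, ‖x‖ ≤ 1 → ‖(|T x| - u) ⊔ 0‖ ≤ ε :=
  stmt_19_general e heunit ρ hmono ρ' h'hom h'mono h'finer T hTsc
end
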